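/- arXiv:2106.13729 — 2 statements merged into one kernel-verified Lean document; each statement's English description precedes it below -/
import Mathlib

section
/- Let a < b be real numbers, let f : ℝ × ℝ → ℂ be continuous on [a,b] × [a,b], and let M := sup of |f| on [a,b] × [a,b]. Then for every n ≥ 1 and all x, y ∈ [a,b] with y ≤ x, the iterated Volterra power satisfies |f^{∗n}(x, y)| ≤ Mⁿ · (x − y)^{n−1} / (n−1)!. -/
noncomputable def volterraComp (f l : ℝ × ℝ → ℂ) : ℝ × ℝ → ℂ :=
  fun p => ∫ ζ in p.2..p.1, f (p.1, ζ) * l (ζ, p.2)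

/-- `volterraPow f n` is the iterated Volterra power `f^{∗(n+1)}`,
so that `volterraPow f 0 = f^{∗1} = f`. -/
noncomputable def volterraPow (f : ℝ × ℝ → ℂ) : ℕ → ℝ × ℝ → ℂ
  | 0 => f
  | n + 1 => volterraComp f (volterraPow f n)

/-! Each Volterra composition with a kernel bounded by `M` integrates the previous bound
`Mᵐ⁺¹ (x - y)ᵐ / m!` over `[y, x]`, which produces the next term of the exponential series. -/

open MeasureTheory

theorem integral_sub_pow_div_factorial (m : ℕ) (x y : ℝ) :
    ∫ ζ in y..x, (ζ - y) ^ m / m.factorial = (x - y) ^ (m + 1) / (m + 1).factorial := by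
  rw [intervalIntegral.integral_div, intervalIntegral.integral_comp_sub_right (· ^ m) y,
    sub_self, integral_pow, Nat.factorial_succ]
  push_cast
  field_simp
  ring

theorem norm_volterraComp_le {f l : ℝ × ℝ → ℂ} {g : ℝ → ℝ} {M x y : ℝ} (hyx : y ≤ x)
    (hf : ∀ ζ ∈ Set.Icc y x, ‖f (x, ζ)‖ ≤ M) (hl : ∀ ζ ∈ Set.Icc y x, ‖l (ζ, y)‖ ≤ g ζ)
    (hg : IntervalIntegrable g volume y x) :
    ‖volterraComp f l (x, y)‖ ≤ M * ∫ ζ in y..x, g ζ := by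
  have hM : 0 ≤ M := (norm_nonneg _).trans (hf x ⟨hyx, le_rfl⟩)
  rw [← intervalIntegral.integral_const_mul]
  refine intervalIntegral.norm_integral_le_of_norm_le hyx
    (ae_of_all _ fun ζ hζ => ?_) (hg.const_mul M)
  rw [norm_mul]
  exact mul_le_mul (hf ζ (Set.Ioc_subset_Icc_self hζ)) (hl ζ (Set.Ioc_subset_Icc_self hζ))
    (norm_nonneg _) hM

theorem norm_volterraPow_le {f : ℝ × ℝ → ℂ} {a b M : ℝ}
    (hf : ∀ p ∈ Set.Icc a b ×ˢ Set.Icc a b, ‖f p‖ ≤ M) (m : ℕ) {x y : ℝ}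
    (hx : x ∈ Set.Icc a b) (hy : y ∈ Set.Icc a b) (hyx : y ≤ x) :
    ‖volterraPow f m (x, y)‖ ≤ M ^ (m + 1) * ((x - y) ^ m / m.factorial) := by
  induction m generalizing x with
  | zero => simpa [volterraPow] using hf (x, y) ⟨hx, hy⟩
  | succ m ih =>
    have hmem {ζ : ℝ} (hζ : ζ ∈ Set.Icc y x) : ζ ∈ Set.Icc a b :=
      ⟨hy.1.trans hζ.1, hζ.2.trans hx.2⟩
    calc ‖volterraPow f (m + 1) (x, y)‖
        ≤ M * ∫ ζ in y..x, M ^ (m + 1) * ((ζ - y) ^ m / m.factorial) :=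
          norm_volterraComp_le hyx (fun ζ hζ => hf (x, ζ) ⟨hx, hmem hζ⟩)
            (fun ζ hζ => ih (hmem hζ) hζ.1) (Continuous.intervalIntegrable (by fun_prop) _ _)
      _ = M ^ (m + 2) * ((x - y) ^ (m + 1) / (m + 1).factorial) := by
          rw [intervalIntegral.integral_const_mul, integral_sub_pow_div_factorial]
          ring

theorem volterraPow_bound_general (a b : ℝ) (f : ℝ × ℝ → ℂ)
    (hf : ContinuousOn f (Set.Icc a b ×ˢ Set.Icc a b))
    (M : ℝ) (hM : M = sSup ((fun p => ‖f p‖) '' (Set.Icc a b ×ˢ Set.Icc a b))) :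
    ∀ n : ℕ, 1 ≤ n → ∀ x ∈ Set.Icc a b, ∀ y ∈ Set.Icc a b, y ≤ x →
      ‖volterraPow f (n - 1) (x, y)‖ ≤
        M ^ n * (x - y) ^ (n - 1) / (Nat.factorial (n - 1)) := by
  have hbdd : BddAbove ((fun p => ‖f p‖) '' (Set.Icc a b ×ˢ Set.Icc a b)) :=
    (isCompact_Icc.prod isCompact_Icc).bddAbove_image hf.norm
  have hle : ∀ p ∈ Set.Icc a b ×ˢ Set.Icc a b, ‖f p‖ ≤ M := fun p hp =>
    hM ▸ le_csSup hbdd ⟨p, hp, rfl⟩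
  rintro n hn x hx y hy hyx
  obtain ⟨m, rfl⟩ := Nat.exists_eq_add_of_le' hn
  simpa [mul_div_assoc] using norm_volterraPow_le hle m hx hy hyx

/-- Factorial bound on the iterated Volterra powers of a continuous kernel:
`|f^{∗n}(x,y)| ≤ Mⁿ (x-y)^{n-1} / (n-1)!` where `M = sup |f|` on the square. -/
theorem volterraPow_bound (a b : ℝ) (hab : a < b) (f : ℝ × ℝ → ℂ)
    (hf : ContinuousOn f (Set.Icc a b ×ˢ Set.Icc a b))
    (M : ℝ) (hM : M = sSup ((fun p => ‖f p‖) '' (Set.Icc a b ×ˢ Set.Icc a b))) :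
    ∀ n : ℕ, 1 ≤ n → ∀ x ∈ Set.Icc a b, ∀ y ∈ Set.Icc a b, y ≤ x →
      ‖volterraPow f (n - 1) (x, y)‖ ≤
        M ^ n * (x - y) ^ (n - 1) / (Nat.factorial (n - 1)) :=
  volterraPow_bound_general a b f hf M hM
end

section
/- Let a < b be real numbers and let f : ℝ × ℝ → ℂ be continuous on [a,b] × [a,b]. For each N ≥ 1 set Δz := (b − a)/N and grid points z_k := a + kΔz for k = 0, …, N, and let F_N be the (N+1) × (N+1) complex matrix with (F_N)_{ij} := f(z_i, z_j) if i ≥ j and 0 otherwise. Then for all N sufficiently large the matrix Id − Δz·F_N is invertible, and the (N, 0) entry satisfies lim_{N→∞} (1/Δz) · ((Id − Δz·F_N)^{-1} − Id)_{N,0} = ∑_{n=1}^∞ f^{∗n}(b, a), the sum of the iterated Volterra powers evaluated at (b, a). -/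
/-- The lower-triangular sample matrix of a kernel `f` on the uniform grid
`z_k = a + k (b-a)/N`, `k = 0, …, N`. -/
noncomputable def gridF (a b : ℝ) (f : ℝ × ℝ → ℂ) (N : ℕ) :
    Matrix (Fin (N + 1)) (Fin (N + 1)) ℂ := fun i j =>
  if (j : ℕ) ≤ (i : ℕ) then
    f (a + ((i : ℕ) : ℝ) * ((b - a) / N), a + ((j : ℕ) : ℝ) * ((b - a) / N)) else 0

/-!
Put `Δ = (b - a) / N`, `z_k = a + kΔ` and `A = Δ F_N`. The entry `(A^{n+1})_{ij} / Δ` is the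
rectangle-rule discretisation of `f^{∗(n+1)}(z_i, z_j)`, and by induction on `n` it converges to
it uniformly in `j ≤ i ≤ N`, each step being a Riemann sum of a uniformly continuous integrand.
If `‖f‖ ≤ M`, the hockey-stick identity bounds it by `M^{n+1} Δ^n C(N+n, n)`, which for large `N`
is at most `M ((2(b-a)M)^n / n! + 2^{-n})`, summable in `n`. So the Neumann series `∑ A^n`
converges and inverts `1 - A`, the corner entry of `((1 - A)⁻¹ - 1) / Δ` is the series of the
discretised powers, and Tannery's theorem passes to the limit termwise. Replacing `f` by `f`
composed with the projection onto the square makes it continuous and bounded on the plane and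
changes neither `F_N` nor the Volterra powers at points of the square.
-/

open Filter Finset Topology MeasureTheory

noncomputable def gridPt (a b : ℝ) (N k : ℕ) : ℝ := a + k * ((b - a) / N)

theorem tendsto_gridStep (a b : ℝ) : Tendsto (fun N : ℕ => (b - a) / N) atTop (𝓝 0) :=
  tendsto_const_div_atTop_nhds_zero_nat _

section Grid

variable {a b : ℝ} {N : ℕ}

@[simp] theorem gridPt_zero : gridPt a b N 0 = a := by simp [gridPt]

theorem gridPt_self (hN : N ≠ 0) : gridPt a b N N = b := by
  rw [gridPt, mul_div_cancel₀ _ (Nat.cast_ne_zero.2 hN)]; ring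

theorem gridPt_succ (k : ℕ) : gridPt a b N (k + 1) = gridPt a b N k + (b - a) / N := by
  simp only [gridPt]; push_cast; ring

theorem gridPt_monotone (hab : a ≤ b) : Monotone (gridPt a b N) := fun k l hkl => by
  have : 0 ≤ (b - a) / N := div_nonneg (sub_nonneg.2 hab) N.cast_nonneg
  simp only [gridPt]; gcongr

theorem gridPt_mem_Icc (hab : a ≤ b) {k : ℕ} (hk : k ≤ N) : gridPt a b N k ∈ Set.Icc a b := by
  refine ⟨by simpa using gridPt_monotone (N := N) hab (Nat.zero_le k), ?_⟩
  rcases N.eq_zero_or_pos with rfl | hN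
  · simp [Nat.le_zero.1 hk, hab]
  · simpa [gridPt_self hN.ne'] using gridPt_monotone (N := N) hab hk

end Grid

theorem sum_Icc_choose_sub_add {i j : ℕ} (hji : j ≤ i) (n : ℕ) :
    ∑ k ∈ Icc j i, (k - j + n).choose n = (i - j + n + 1).choose (n + 1) := by
  rw [← Ico_add_one_right_eq_Icc, sum_Ico_eq_sum_range, Nat.sub_add_comm hji,
    ← Nat.sum_range_add_choose]
  exact sum_congr rfl fun d _ => by rw [Nat.add_sub_cancel_left]

noncomputable def discreteVolterraPow (a b : ℝ) (f : ℝ × ℝ → ℂ) (N : ℕ) : ℕ → ℕ → ℕ → ℂ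
  | 0 => fun i j => if j ≤ i then f (gridPt a b N i, gridPt a b N j) else 0
  | n + 1 => fun i j => ∑ k ∈ Icc j i,
      ((b - a) / N) • (f (gridPt a b N i, gridPt a b N k) * discreteVolterraPow a b f N n k j)

section Discrete

variable {a b : ℝ} {f : ℝ × ℝ → ℂ} {N : ℕ}

theorem discreteVolterraPow_zero_of_le {i j : ℕ} (h : j ≤ i) :
    discreteVolterraPow a b f N 0 i j = f (gridPt a b N i, gridPt a b N j) := if_pos h

theorem discreteVolterraPow_succ (n i j : ℕ) :
    discreteVolterraPow a b f N (n + 1) i j = ∑ k ∈ Icc j i,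
      ((b - a) / N) • (f (gridPt a b N i, gridPt a b N k) * discreteVolterraPow a b f N n k j) :=
  rfl

theorem discreteVolterraPow_of_lt {i j : ℕ} (h : i < j) (n : ℕ) :
    discreteVolterraPow a b f N n i j = 0 := by
  cases n with
  | zero => exact if_neg (Nat.not_le.2 h)
  | succ n => rw [discreteVolterraPow_succ, Icc_eq_empty_of_lt h, sum_empty]

theorem smul_gridF_pow_apply (n : ℕ) (i j : Fin (N + 1)) :
    (((((b - a) / N : ℝ) : ℂ) • gridF a b f N) ^ (n + 1)) i j =
      ((b - a) / N) • discreteVolterraPow a b f N n i j := by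
  set Δ : ℝ := (b - a) / N
  set F : ℕ → ℕ → ℂ := fun i k => if k ≤ i then Δ • f (gridPt a b N i, gridPt a b N k) else 0
  have hF (i k : Fin (N + 1)) : ((Δ : ℂ) • gridF a b f N) i k = F i k := by
    simp only [Matrix.smul_apply, gridF, gridPt, F, Complex.real_smul, smul_eq_mul]
    split_ifs <;> simp [Δ]
  induction n generalizing i j with
  | zero => rw [pow_one, hF]; simp only [F]; split_ifs with h <;> simp [discreteVolterraPow, h]
  | succ n ih =>
    rw [pow_succ', Matrix.mul_apply, discreteVolterraPow_succ, smul_sum]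
    simp only [hF, ih]
    rw [Fin.sum_univ_eq_sum_range (fun k => F i k * Δ • discreteVolterraPow a b f N n k j)]
    rw [← sum_subset (fun k hk => mem_range.2 ((mem_Icc.1 hk).2.trans_lt i.isLt))]
    · refine sum_congr rfl fun k hk => ?_
      simp only [F, if_pos (mem_Icc.1 hk).2, Complex.real_smul]
      ring
    · intro k _ hk
      rcases lt_or_ge k j with hkj | hjk
      · rw [discreteVolterraPow_of_lt hkj, smul_zero, mul_zero]
      · simp only [F, if_neg fun h => hk (mem_Icc.2 ⟨hjk, h⟩), zero_mul]

theorem norm_discreteVolterraPow_le (hab : a ≤ b) {M : ℝ} (hM : ∀ p, ‖f p‖ ≤ M) (n : ℕ)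
    {i j : ℕ} (hji : j ≤ i) :
    ‖discreteVolterraPow a b f N n i j‖ ≤
      M ^ (n + 1) * ((b - a) / N) ^ n * (i - j + n).choose n := by
  have hΔ : 0 ≤ (b - a) / N := div_nonneg (sub_nonneg.2 hab) N.cast_nonneg
  have hM0 : 0 ≤ M := (norm_nonneg _).trans (hM 0)
  induction n generalizing i with
  | zero => simpa [discreteVolterraPow_zero_of_le hji] using hM _
  | succ n ih =>
    rw [discreteVolterraPow_succ]
    calc _ ≤ ∑ k ∈ Icc j i, (b - a) / N * (M * (M ^ (n + 1) * ((b - a) / N) ^ n *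
            (k - j + n).choose n)) := by
          refine (norm_sum_le _ _).trans (sum_le_sum fun k hk => ?_)
          rw [norm_smul, norm_mul, Real.norm_of_nonneg hΔ]
          gcongr
          exacts [hM _, ih (mem_Icc.1 hk).1]
      _ = M ^ (n + 2) * ((b - a) / N) ^ (n + 1) * ∑ k ∈ Icc j i, ((k - j + n).choose n : ℝ) := by
          rw [mul_sum]; exact sum_congr rfl fun k _ => by ring
      _ = _ := by
          rw [← Nat.cast_sum, sum_Icc_choose_sub_add hji, add_assoc]

end Discrete

open Nat in
theorem pow_div_factorial_self_le_three_pow (n : ℕ) : (n : ℝ) ^ n / n ! ≤ 3 ^ n := by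
  calc (n : ℝ) ^ n / n ! ≤ Real.exp n := Real.pow_div_factorial_le_exp _ n.cast_nonneg n
    _ = Real.exp 1 ^ n := by rw [← Real.exp_nat_mul, mul_one]
    _ ≤ 3 ^ n := by gcongr; exact Real.exp_one_lt_three.le

open Nat in
theorem pow_mul_choose_le {r M : ℝ} (hr : 0 ≤ r) (hM : 0 ≤ M) {N : ℕ} (hN : 0 < N)
    (hNrM : 12 * r * M ≤ N) (n : ℕ) :
    M ^ (n + 1) * (r / N) ^ n * (N + n).choose n ≤ M * ((2 * r * M) ^ n / n ! + (1 / 2) ^ n) := by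
  have hN' : (0 : ℝ) < N := Nat.cast_pos.2 hN
  have hC : ((N + n).choose n : ℝ) ≤ 2 ^ n * ((N : ℝ) ^ n + (n : ℝ) ^ n) / n ! := by
    refine (choose_le_pow_div n (N + n)).trans ?_
    push_cast
    gcongr
    exact (add_pow_le N.cast_nonneg n.cast_nonneg n).trans (by gcongr <;> [norm_num; omega])
  have hq : 2 * r * M / N * 3 ≤ 1 / 2 := by
    rw [div_mul_eq_mul_div, div_le_iff₀ hN']; linarith
  calc M ^ (n + 1) * (r / N) ^ n * (N + n).choose n
      ≤ M ^ (n + 1) * (r / N) ^ n * (2 ^ n * ((N : ℝ) ^ n + (n : ℝ) ^ n) / n !) := by gcongr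
    _ = M * ((2 * r * M) ^ n / n ! + (2 * r * M / N) ^ n * ((n : ℝ) ^ n / n !)) := by
        rw [div_pow, div_pow]; field_simp; ring
    _ ≤ M * ((2 * r * M) ^ n / n ! + (2 * r * M / N) ^ n * 3 ^ n) := by
        gcongr; exact pow_div_factorial_self_le_three_pow n
    _ ≤ M * ((2 * r * M) ^ n / n ! + (1 / 2) ^ n) := by
        rw [← mul_pow]; gcongr

open Nat in
theorem eventually_norm_discreteVolterraPow_le {a b : ℝ} (hab : a ≤ b) {f : ℝ × ℝ → ℂ} {M : ℝ}
    (hM : ∀ p, ‖f p‖ ≤ M) :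
    ∀ᶠ N in atTop, ∀ n i j, i ≤ N →
      ‖discreteVolterraPow a b f N n i j‖ ≤ M * ((2 * (b - a) * M) ^ n / n ! + (1 / 2) ^ n) := by
  have hM0 : 0 ≤ M := (norm_nonneg _).trans (hM 0)
  filter_upwards [eventually_gt_atTop 0, eventually_ge_atTop ⌈12 * (b - a) * M⌉₊]
    with N hN hNc n i j hi
  rcases lt_or_ge i j with hij | hji
  · rw [discreteVolterraPow_of_lt hij, norm_zero]; positivity
  calc _ ≤ M ^ (n + 1) * ((b - a) / N) ^ n * (i - j + n).choose n :=
        norm_discreteVolterraPow_le hab hM n hji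
    _ ≤ M ^ (n + 1) * ((b - a) / N) ^ n * (N + n).choose n := by
        gcongr; omega
    _ ≤ _ := pow_mul_choose_le (sub_nonneg.2 hab) hM0 hN (Nat.ceil_le.1 hNc) n

theorem continuous_volterraComp {f l : ℝ × ℝ → ℂ} (hf : Continuous f) (hl : Continuous l) :
    Continuous (volterraComp f l) := by
  set H : ℝ × ℝ → ℝ → ℂ := fun p ζ => f (p.1, ζ) * l (ζ, p.2)
  have hH : Continuous H.uncurry := by fun_prop
  have h (p : ℝ × ℝ) :
      volterraComp f l p = (∫ ζ in 0..p.1, H p ζ) - ∫ ζ in 0..p.2, H p ζ :=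
    (intervalIntegral.integral_interval_sub_left
      ((hH.uncurry_left p).intervalIntegrable _ _)
      ((hH.uncurry_left p).intervalIntegrable _ _)).symm
  rw [funext h]
  exact (intervalIntegral.continuous_parametric_intervalIntegral_of_continuous hH
    continuous_fst).sub
    (intervalIntegral.continuous_parametric_intervalIntegral_of_continuous hH continuous_snd)

theorem continuous_volterraPow {f : ℝ × ℝ → ℂ} (hf : Continuous f) (n : ℕ) :
    Continuous (volterraPow f n) := by
  induction n with
  | zero => exact hf
  | succ n ih => exact continuous_volterraComp hf ih

section Riemann

variable {E : Type*} [NormedAddCommGroup E] [NormedSpace ℝ E] [CompleteSpace E]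

theorem norm_smul_sub_integral_le {g : ℝ → E} {u v η : ℝ} (huv : u ≤ v)
    (hg : IntervalIntegrable g volume u v) (hη : ∀ ζ ∈ Set.Icc u v, ‖g ζ - g u‖ ≤ η) :
    ‖(v - u) • g u - ∫ ζ in u..v, g ζ‖ ≤ η * (v - u) := by
  rw [← intervalIntegral.integral_const,
    ← intervalIntegral.integral_sub intervalIntegrable_const hg,
    ← abs_of_nonneg (sub_nonneg.2 huv)]
  refine intervalIntegral.norm_integral_le_of_norm_le_const fun ζ hζ => ?_
  rw [norm_sub_rev]
  exact hη ζ (Set.Ioc_subset_Icc_self (Set.uIoc_of_le huv ▸ hζ))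

theorem norm_sum_smul_sub_integral_le {g : ℝ → E} {x : ℕ → ℝ} (hx : Monotone x) {m n : ℕ}
    (hmn : m ≤ n) {η : ℝ}
    (hg : ∀ k ∈ Set.Ico m n, IntervalIntegrable g volume (x k) (x (k + 1)))
    (hη : ∀ k ∈ Set.Ico m n, ∀ ζ ∈ Set.Icc (x k) (x (k + 1)), ‖g ζ - g (x k)‖ ≤ η) :
    ‖∑ k ∈ Ico m n, (x (k + 1) - x k) • g (x k) - ∫ ζ in x m..x n, g ζ‖ ≤ η * (x n - x m) := by
  rw [← intervalIntegral.sum_integral_adjacent_intervals_Ico hmn hg, ← sum_sub_distrib,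
    ← sum_Ico_sub x hmn, mul_sum]
  exact (norm_sum_le _ _).trans <| sum_le_sum fun k hk =>
    norm_smul_sub_integral_le (hx k.le_succ) (hg k (mem_Ico.1 hk)) (hη k (mem_Ico.1 hk))

theorem eventually_norm_gridSum_sub_integral_le {a b : ℝ} (hab : a ≤ b) {H : ℝ × ℝ × ℝ → E}
    (hH : Continuous H) {ε : ℝ} (hε : 0 < ε) :
    ∀ᶠ N : ℕ in atTop, ∀ i j, j ≤ i → i ≤ N →
      ‖∑ k ∈ Icc j i, ((b - a) / N) • H (gridPt a b N i, gridPt a b N k, gridPt a b N j) -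
        ∫ ζ in gridPt a b N j..gridPt a b N i, H (gridPt a b N i, ζ, gridPt a b N j)‖ ≤ ε := by
  set cube : Set (ℝ × ℝ × ℝ) := Set.Icc a b ×ˢ (Set.Icc a b ×ˢ Set.Icc a b)
  have hcube : IsCompact cube := isCompact_Icc.prod (isCompact_Icc.prod isCompact_Icc)
  obtain ⟨B, hB⟩ := hcube.exists_bound_of_continuousOn hH.continuousOn
  set η := ε / (2 * (b - a + 1))
  have hη : 0 < η := by positivity
  obtain ⟨δ, hδ, hHδ⟩ := Metric.uniformContinuousOn_iff.1
    (hcube.uniformContinuousOn_of_continuous hH.continuousOn) η hη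
  filter_upwards [(tendsto_gridStep a b).eventually_lt_const hδ,
    ((tendsto_gridStep a b).mul_const B).eventually_le_const (u := ε / 2)
      (by simpa using half_pos hε)]
    with N hNδ hNB i j hji hiN
  set z := gridPt a b N
  have hz : Monotone z := gridPt_monotone hab
  have hzmem {k : ℕ} (hk : k ≤ N) : z k ∈ Set.Icc a b := gridPt_mem_Icc hab hk
  have hΔ : 0 ≤ (b - a) / N := div_nonneg (sub_nonneg.2 hab) N.cast_nonneg
  have hcell : ∀ k ∈ Set.Ico j i, ∀ ζ ∈ Set.Icc (z k) (z (k + 1)),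
      ‖H (z i, ζ, z j) - H (z i, z k, z j)‖ ≤ η := by
    rintro k ⟨-, hki⟩ ζ hζ
    have hζmem : ζ ∈ Set.Icc a b :=
      ⟨(hzmem (by omega)).1.trans hζ.1, hζ.2.trans (hzmem (by omega)).2⟩
    rw [← dist_eq_norm]
    refine (hHδ (z i, ζ, z j) ⟨hzmem hiN, hζmem, hzmem (by omega)⟩ (z i, z k, z j)
      ⟨hzmem hiN, hzmem (by omega), hzmem (by omega)⟩ ?_).le
    have : dist ζ (z k) ≤ (b - a) / N := by
      rw [Real.dist_eq, abs_of_nonneg (sub_nonneg.2 hζ.1)]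
      linarith [hζ.2, gridPt_succ (a := a) (b := b) (N := N) k]
    simpa [Prod.dist_eq, hδ] using this.trans_lt hNδ
  have hsum := norm_sum_smul_sub_integral_le hz hji
    (fun k _ => (hH.comp (by fun_prop)).intervalIntegrable _ _) hcell
  simp only [z, gridPt_succ, add_sub_cancel_left] at hsum
  rw [← Ico_add_one_right_eq_Icc, sum_Ico_succ_top hji, add_sub_right_comm]
  refine (norm_add_le _ _).trans (add_le_add (hsum.trans ?_) ?_) |>.trans_eq (add_halves ε)
  · have hzij : z i - z j ≤ b - a := by linarith [(hzmem hiN).2, (hzmem (hji.trans hiN)).1]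
    calc η * (z i - z j) ≤ η * (b - a) := by gcongr
      _ ≤ ε / 2 := by
        rw [div_mul_eq_mul_div, div_le_div_iff₀ (by positivity) two_pos]
        nlinarith
  · rw [norm_smul, Real.norm_of_nonneg hΔ]
    exact (mul_le_mul_of_nonneg_left
      (hB _ ⟨hzmem hiN, hzmem hiN, hzmem (hji.trans hiN)⟩) hΔ).trans hNB

end Riemann

theorem eventually_norm_discreteVolterraPow_sub_le {a b : ℝ} (hab : a ≤ b) {f : ℝ × ℝ → ℂ}
    (hf : Continuous f) {M : ℝ} (hM : ∀ p, ‖f p‖ ≤ M) (n : ℕ) {ε : ℝ} (hε : 0 < ε) :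
    ∀ᶠ N : ℕ in atTop, ∀ i j, j ≤ i → i ≤ N →
      ‖discreteVolterraPow a b f N n i j -
        volterraPow f n (gridPt a b N i, gridPt a b N j)‖ ≤ ε := by
  induction n generalizing ε with
  | zero =>
    refine Eventually.of_forall fun N i j hji _ => ?_
    rw [discreteVolterraPow_zero_of_le hji, volterraPow, sub_self, norm_zero]
    exact hε.le
  | succ n ih =>
    have hM0 : 0 ≤ M := (norm_nonneg _).trans (hM 0)
    set ε' := ε / (2 * (b - a + 1) * (M + 1))
    have hRiemann := eventually_norm_gridSum_sub_integral_le hab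
      (H := fun p => f (p.1, p.2.1) * volterraPow f n (p.2.1, p.2.2))
      (by have := continuous_volterraPow hf n; fun_prop) (half_pos hε)
    filter_upwards [ih (ε := ε') (by positivity), hRiemann, eventually_gt_atTop 0,
      (tendsto_gridStep a b).eventually_le_const zero_lt_one] with N hN hR hNpos hΔ1 i j hji hiN
    set z := gridPt a b N
    set Δ := (b - a) / N
    have hΔ : 0 ≤ Δ := div_nonneg (sub_nonneg.2 hab) N.cast_nonneg
    have hsplit : discreteVolterraPow a b f N (n + 1) i j - volterraPow f (n + 1) (z i, z j) =
        ∑ k ∈ Icc j i, Δ • (f (z i, z k) * (discreteVolterraPow a b f N n k j -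
          volterraPow f n (z k, z j))) +
        (∑ k ∈ Icc j i, Δ • (f (z i, z k) * volterraPow f n (z k, z j)) -
          ∫ ζ in z j..z i, f (z i, ζ) * volterraPow f n (ζ, z j)) := by
      rw [discreteVolterraPow_succ, ← add_sub_assoc, ← sum_add_distrib]
      simp only [← smul_add, ← mul_add, sub_add_cancel]
      rfl
    have hcard : ((Icc j i).card : ℝ) * Δ ≤ b - a + 1 := by
      have : ((Icc j i).card : ℝ) ≤ N + 1 := by rw [Nat.card_Icc]; exact_mod_cast (by omega)
      calc ((Icc j i).card : ℝ) * Δ ≤ (N + 1) * Δ := by gcongr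
        _ = b - a + Δ := by rw [add_mul, one_mul, mul_div_cancel₀ _ (Nat.cast_pos.2 hNpos).ne']
        _ ≤ b - a + 1 := by linarith
    rw [hsplit]
    refine (norm_add_le _ _).trans (add_le_add ?_ (hR i j hji hiN)) |>.trans_eq (add_halves ε)
    calc _ ≤ ∑ k ∈ Icc j i, Δ * (M * ε') := by
          refine (norm_sum_le _ _).trans (sum_le_sum fun k hk => ?_)
          rw [norm_smul, norm_mul, Real.norm_of_nonneg hΔ]
          gcongr
          exacts [hM _, hN k j (mem_Icc.1 hk).1 ((mem_Icc.1 hk).2.trans hiN)]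
      _ = (Icc j i).card * Δ * (M * ε') := by rw [sum_const, nsmul_eq_mul, mul_assoc]
      _ ≤ (b - a + 1) * (M * ε') := by gcongr
      _ = ε / 2 * (M / (M + 1)) := by
        have : b - a + 1 ≠ 0 := by linarith
        simp only [ε']; field_simp
      _ ≤ ε / 2 :=
        mul_le_of_le_one_right (half_pos hε).le ((div_le_one (by positivity)).2 (by linarith))

theorem tendsto_discreteVolterraPow_last_zero {a b : ℝ} (hab : a ≤ b) {f : ℝ × ℝ → ℂ}
    (hf : Continuous f) {M : ℝ} (hM : ∀ p, ‖f p‖ ≤ M) (n : ℕ) :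
    Tendsto (fun N => discreteVolterraPow a b f N n N 0) atTop (𝓝 (volterraPow f n (b, a))) := by
  refine Metric.tendsto_nhds.2 fun ε hε => ?_
  filter_upwards [eventually_norm_discreteVolterraPow_sub_le hab hf hM n (half_pos hε),
    eventually_ne_atTop 0] with N hN hN0
  have := hN N 0 N.zero_le le_rfl
  rw [gridPt_self hN0, gridPt_zero] at this
  exact (dist_eq_norm _ _).trans_le this |>.trans_lt (half_lt_self hε)

theorem Matrix.isUnit_one_sub_and_inv_eq_tsum {ι R : Type*} [Fintype ι] [DecidableEq ι] [CommRing R]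
    [TopologicalSpace R] [IsTopologicalRing R] [T2Space R] {A : Matrix ι ι R}
    (h : Summable (A ^ ·)) : IsUnit (1 - A) ∧ (1 - A)⁻¹ = ∑' n, A ^ n :=
  ⟨.of_mul_eq_one _ h.one_sub_mul_tsum_pow, Matrix.inv_eq_right_inv h.one_sub_mul_tsum_pow⟩

theorem Matrix.tsum_apply {ι m n R : Type*} [AddCommMonoid R] [TopologicalSpace R] [T2Space R]
    {A : ι → Matrix m n R} (h : Summable A) (i : m) (j : n) :
    (∑' k, A k) i j = ∑' k, A k i j :=
  (Pi.hasSum.1 (Pi.hasSum.1 h.hasSum i) j).tsum_eq.symm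

theorem Matrix.inv_one_sub_sub_one_eq_tsum {ι R : Type*} [Fintype ι] [DecidableEq ι] [CommRing R]
    [TopologicalSpace R] [IsTopologicalRing R] [T2Space R] {A : Matrix ι ι R}
    (h : Summable (A ^ ·)) : (1 - A)⁻¹ - 1 = ∑' n, A ^ (n + 1) := by
  rw [(Matrix.isUnit_one_sub_and_inv_eq_tsum h).2, h.tsum_eq_zero_add, pow_zero,
    add_sub_cancel_left]

section Resolvent

variable {a b : ℝ} {f : ℝ × ℝ → ℂ} {N : ℕ}

theorem summable_smul_gridF_pow {c : ℕ → ℝ} (hc : Summable c)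
    (hK : ∀ n i j, i ≤ N → ‖discreteVolterraPow a b f N n i j‖ ≤ c n) :
    Summable (((((b - a) / N : ℝ) : ℂ) • gridF a b f N) ^ ·) := by
  refine Pi.summable.2 fun i => Pi.summable.2 fun j => (summable_nat_add_iff 1).1 ?_
  refine Summable.of_norm_bounded (hc.mul_left |(b - a) / N|) fun n => ?_
  simp only [smul_gridF_pow_apply, norm_smul, Real.norm_eq_abs]
  exact mul_le_mul_of_nonneg_left (hK n i j (Nat.lt_succ_iff.1 i.isLt)) (abs_nonneg _)

theorem corner_inv_one_sub_smul_gridF (hab : a ≠ b) (hN : N ≠ 0)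
    (h : Summable (((((b - a) / N : ℝ) : ℂ) • gridF a b f N) ^ ·)) :
    (1 / (((b - a) / N : ℝ) : ℂ)) *
        ((((1 : Matrix (Fin (N + 1)) (Fin (N + 1)) ℂ) -
          (((b - a) / N : ℝ) : ℂ) • gridF a b f N)⁻¹ - 1) (Fin.last N) 0) =
      ∑' n, discreteVolterraPow a b f N n N 0 := by
  have hΔ : (((b - a) / N : ℝ) : ℂ) ≠ 0 := by
    exact_mod_cast div_ne_zero (sub_ne_zero.2 hab.symm) (Nat.cast_ne_zero.2 hN)
  have h' := (summable_nat_add_iff 1).2 h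
  rw [Matrix.inv_one_sub_sub_one_eq_tsum h]
  simp only [Matrix.tsum_apply h', smul_gridF_pow_apply, Complex.real_smul, tsum_mul_left]
  rw [Fin.val_last, Fin.val_zero, ← mul_assoc, one_div_mul_cancel hΔ, one_mul]

end Resolvent

open Nat in
theorem discretized_resolvent_tendsto_of_continuous {a b : ℝ} (hab : a < b) {f : ℝ × ℝ → ℂ}
    (hf : Continuous f) {M : ℝ} (hM : ∀ p, ‖f p‖ ≤ M) :
    (∀ᶠ N : ℕ in atTop,
      IsUnit ((1 : Matrix (Fin (N + 1)) (Fin (N + 1)) ℂ) -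
        (((b - a) / N : ℝ) : ℂ) • gridF a b f N)) ∧
    Tendsto
      (fun N : ℕ => (1 / (((b - a) / N : ℝ) : ℂ)) *
        ((((1 : Matrix (Fin (N + 1)) (Fin (N + 1)) ℂ) -
            (((b - a) / N : ℝ) : ℂ) • gridF a b f N)⁻¹ - 1) (Fin.last N) 0))
      atTop (𝓝 (∑' n : ℕ, volterraPow f n (b, a))) := by
  have hc : Summable fun n => M * ((2 * (b - a) * M) ^ n / n ! + (1 / 2) ^ n) :=
    ((Real.summable_pow_div_factorial _).add
      (summable_geometric_of_lt_one (by norm_num) (by norm_num))).mul_left M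
  have hK := eventually_norm_discreteVolterraPow_le hab.le hM
  have hsum := hK.mono fun N hN => summable_smul_gridF_pow hc hN
  refine ⟨hsum.mono fun N h => (Matrix.isUnit_one_sub_and_inv_eq_tsum h).1, ?_⟩
  refine (tendsto_tsum_of_dominated_convergence hc
    (tendsto_discreteVolterraPow_last_zero hab.le hf hM) ?_).congr' ?_
  · filter_upwards [hK] with N hN n using hN n N 0 le_rfl
  · filter_upwards [hsum, eventually_ne_atTop 0] with N h hN
    exact (corner_inv_one_sub_smul_gridF hab.ne hN h).symm

section Extension

variable {a b : ℝ} {f g : ℝ × ℝ → ℂ}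

theorem exists_continuous_bounded_eqOn_Icc_prod {E : Type*} [SeminormedAddCommGroup E]
    {f : ℝ × ℝ → E} (hab : a ≤ b) (hf : ContinuousOn f (Set.Icc a b ×ˢ Set.Icc a b)) :
    ∃ g : ℝ × ℝ → E, ∃ M, Continuous g ∧ (∀ p, ‖g p‖ ≤ M) ∧
      Set.EqOn g f (Set.Icc a b ×ˢ Set.Icc a b) := by
  set π : ℝ × ℝ → ℝ × ℝ := fun p => (Set.projIcc a b hab p.1, Set.projIcc a b hab p.2)
  have hπ (p) : π p ∈ Set.Icc a b ×ˢ Set.Icc a b :=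
    ⟨(Set.projIcc a b hab p.1).2, (Set.projIcc a b hab p.2).2⟩
  obtain ⟨M, hM⟩ := (isCompact_Icc.prod isCompact_Icc).exists_bound_of_continuousOn hf
  refine ⟨f ∘ π, M, hf.comp_continuous (by fun_prop) hπ, fun p => hM _ (hπ p), fun p hp => ?_⟩
  simp [π, Set.projIcc_of_mem hab hp.1, Set.projIcc_of_mem hab hp.2]

theorem volterraPow_congr (hfg : Set.EqOn f g (Set.Icc a b ×ˢ Set.Icc a b)) (n : ℕ) {x y : ℝ}
    (hx : x ∈ Set.Icc a b) (hy : y ∈ Set.Icc a b) :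
    volterraPow f n (x, y) = volterraPow g n (x, y) := by
  induction n generalizing x with
  | zero => exact hfg ⟨hx, hy⟩
  | succ n ih =>
    refine intervalIntegral.integral_congr fun ζ hζ => ?_
    have hζ' : ζ ∈ Set.Icc a b := Set.uIcc_subset_Icc hy hx hζ
    simp only [hfg (show (x, ζ) ∈ _ from ⟨hx, hζ'⟩), ih hζ']

theorem gridF_congr (hab : a ≤ b) (hfg : Set.EqOn f g (Set.Icc a b ×ˢ Set.Icc a b)) :
    gridF a b f = gridF a b g := by
  funext N i j
  simp only [gridF]
  split_ifs
  · exact hfg ⟨gridPt_mem_Icc hab (Nat.lt_succ_iff.1 i.isLt),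
      gridPt_mem_Icc hab (Nat.lt_succ_iff.1 j.isLt)⟩
  · rfl

end Extension

/-- The corner entry of the discretized ∗-resolvent (rectangular rule) converges
to the sum of the iterated Volterra powers at `(b, a)`. -/
theorem discretized_resolvent_tendsto (a b : ℝ) (hab : a < b) (f : ℝ × ℝ → ℂ)
    (hf : ContinuousOn f (Set.Icc a b ×ˢ Set.Icc a b)) :
    (∀ᶠ N : ℕ in Filter.atTop,
      IsUnit ((1 : Matrix (Fin (N + 1)) (Fin (N + 1)) ℂ) -
        (((b - a) / N : ℝ) : ℂ) • gridF a b f N)) ∧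
    Filter.Tendsto
      (fun N : ℕ => (1 / (((b - a) / N : ℝ) : ℂ)) *
        ((((1 : Matrix (Fin (N + 1)) (Fin (N + 1)) ℂ) -
            (((b - a) / N : ℝ) : ℂ) • gridF a b f N)⁻¹ - 1) (Fin.last N) 0))
      Filter.atTop (nhds (∑' n : ℕ, volterraPow f n (b, a))) := by
  obtain ⟨g, M, hg, hM, hgf⟩ := exists_continuous_bounded_eqOn_Icc_prod hab.le hf
  have hV (n : ℕ) : volterraPow f n (b, a) = volterraPow g n (b, a) :=
    volterraPow_congr hgf.symm n (Set.right_mem_Icc.2 hab.le) (Set.left_mem_Icc.2 hab.le)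
  rw [gridF_congr hab.le hgf.symm, tsum_congr hV]
  exact discretized_resolvent_tendsto_of_continuous hab hg hM
end
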